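/- Assume each reference output space H_{R_O} is one-dimensional, so that R(A) = Σ_{g∈S_n} U_g^{SR} (A ⊗ [01…(n−1)]^{R_I}) (U_g^{SR})†, and let d_O = (dim H_O)^n be the dimension of the total system output space. Let {M_{i_1…i_n} = M_{i_1} ⊗ … ⊗ M_{i_n}} be a collection of N positive semidefinite product operators on S = (H_I ⊗ H_O)^{⊗n} whose sum M = Σ M_{i_1…i_n} satisfies Tr_{S_O}[M] = 1^{S_I} (i.e., the collection forms an instrument). Define M^inv_{i_1…i_n} = R(M_{i_1…i_n}) + (1/(N d_O))·(1^{S R_I} − R(1^S)). Then Tr_{S_O}[Σ M^inv_{i_1…i_n}] = 1^{S_I R_I}, i.e., the invariant measurement operators sum to the Choi matrix of a CPTP map. -/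
import Mathlib


open Matrix Kronecker ComplexOrder

/-- Tensor product `M_1 ⊗ … ⊗ M_n` of a family of square matrices, realised on the
product index type. -/
noncomputable def tensorAll {n : ℕ} {γ : Fin n → Type} [∀ k, Fintype (γ k)]
    (M : ∀ k, Matrix (γ k) (γ k) ℂ) : Matrix (∀ k, γ k) (∀ k, γ k) ℂ :=
  Matrix.of fun f f' => ∏ k, M k (f k) (f' k)

/-- The rank-one projector onto `|0⟩⊗|1⟩⊗…⊗|n−1⟩` in `(ℂ^n)^{⊗n}`. -/
noncomputable def refProj (n : ℕ) : Matrix (Fin n → Fin n) (Fin n → Fin n) ℂ :=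
  Matrix.of fun r r' => if r = (fun k => k) ∧ r' = (fun k => k) then 1 else 0

/-- The unitary `U_g^{SR}` jointly permuting the `n` system factors `H_I ⊗ H_O`
(basis `Fin dI × Fin dO`) and the `n` reference input factors `ℂ^n`, according to
`g ∈ S_n` (the reference output spaces being one-dimensional). -/
noncomputable def permSR (n dI dO : ℕ) (g : Equiv.Perm (Fin n)) :
    Matrix ((Fin n → Fin dI × Fin dO) × (Fin n → Fin n))
      ((Fin n → Fin dI × Fin dO) × (Fin n → Fin n)) ℂ :=
  Matrix.of fun p q => if q = (p.1 ∘ g, p.2 ∘ g) then 1 else 0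

/-- `R(A) = Σ_{g ∈ S_n} U_g^{SR} (A ⊗ [01…(n−1)]^{R_I}) (U_g^{SR})†` (reference
outputs one-dimensional). -/
noncomputable def Rmap (n dI dO : ℕ)
    (A : Matrix (Fin n → Fin dI × Fin dO) (Fin n → Fin dI × Fin dO) ℂ) :
    Matrix ((Fin n → Fin dI × Fin dO) × (Fin n → Fin n))
      ((Fin n → Fin dI × Fin dO) × (Fin n → Fin n)) ℂ :=
  ∑ g : Equiv.Perm (Fin n),
    permSR n dI dO g * (A ⊗ₖ refProj n) * (permSR n dI dO g)ᴴ

/-- Partial trace over the total system output `S_O = H_O^{⊗n}` of an operator on the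
system space `S = (H_I ⊗ H_O)^{⊗n}`, yielding an operator on `S_I = H_I^{⊗n}`. -/
noncomputable def ptraceSO {n dI dO : ℕ}
    (M : Matrix (Fin n → Fin dI × Fin dO) (Fin n → Fin dI × Fin dO) ℂ) :
    Matrix (Fin n → Fin dI) (Fin n → Fin dI) ℂ :=
  Matrix.of fun a a' => ∑ b : Fin n → Fin dO, M (fun k => (a k, b k)) (fun k => (a' k, b k))

/-- Partial trace over the total system output `S_O = H_O^{⊗n}` of an operator on
`S ⊗ R_I`, yielding an operator on `S_I ⊗ R_I`. -/
noncomputable def ptraceSOR {n dI dO : ℕ}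
    (X : Matrix ((Fin n → Fin dI × Fin dO) × (Fin n → Fin n))
      ((Fin n → Fin dI × Fin dO) × (Fin n → Fin n)) ℂ) :
    Matrix ((Fin n → Fin dI) × (Fin n → Fin n)) ((Fin n → Fin dI) × (Fin n → Fin n)) ℂ :=
  Matrix.of fun p q => ∑ b : Fin n → Fin dO,
    X ((fun k => (p.1 k, b k)), p.2) ((fun k => (q.1 k, b k)), q.2)

section aux
variable {n dI dO : ℕ}

lemma Rmap_apply (A : Matrix (Fin n → Fin dI × Fin dO) (Fin n → Fin dI × Fin dO) ℂ)
    (p q : (Fin n → Fin dI × Fin dO) × (Fin n → Fin n)) :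
    Rmap n dI dO A p q =
      ∑ g : Equiv.Perm (Fin n), A (p.1 ∘ g) (q.1 ∘ g) * refProj n (p.2 ∘ g) (q.2 ∘ g) := by
  unfold Rmap
  rw [Matrix.sum_apply]
  refine Finset.sum_congr rfl fun g _ => ?_
  simp only [Matrix.mul_apply, Matrix.conjTranspose_apply, permSR, Matrix.of_apply,
    apply_ite star, star_one, star_zero, ite_mul, mul_ite, one_mul, mul_one, zero_mul,
    mul_zero, Finset.sum_ite_eq', Finset.mem_univ, if_true]
  rfl

lemma ptraceSO_sum {α : Type*} [Fintype α]
    (X : α → Matrix (Fin n → Fin dI × Fin dO) (Fin n → Fin dI × Fin dO) ℂ)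
    (a a' : Fin n → Fin dI) :
    ptraceSO (∑ i, X i) a a' = ∑ i, ptraceSO (X i) a a' := by
  simp only [ptraceSO, Matrix.of_apply, Matrix.sum_apply]
  exact Finset.sum_comm

lemma ptraceSOR_Rmap (A : Matrix (Fin n → Fin dI × Fin dO) (Fin n → Fin dI × Fin dO) ℂ)
    (p q : (Fin n → Fin dI) × (Fin n → Fin n)) :
    ptraceSOR (Rmap n dI dO A) p q =
      ∑ g : Equiv.Perm (Fin n),
        ptraceSO A (p.1 ∘ g) (q.1 ∘ g) * refProj n (p.2 ∘ g) (q.2 ∘ g) := by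
  simp only [ptraceSOR, Matrix.of_apply, Rmap_apply]
  rw [Finset.sum_comm]
  refine Finset.sum_congr rfl fun g _ => ?_
  rw [← Finset.sum_mul]
  congr 1
  · show _ = ptraceSO A (p.1 ∘ g) (q.1 ∘ g)
    simp only [ptraceSO, Matrix.of_apply]
    refine Fintype.sum_equiv (Equiv.arrowCongr g.symm (Equiv.refl (Fin dO))) _ _ fun b => ?_
    congr 1

lemma ptraceSOR_sum {α : Type*} [Fintype α]
    (X : α → Matrix ((Fin n → Fin dI × Fin dO) × (Fin n → Fin n))
      ((Fin n → Fin dI × Fin dO) × (Fin n → Fin n)) ℂ)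
    (p q : (Fin n → Fin dI) × (Fin n → Fin n)) :
    ptraceSOR (∑ i, X i) p q = ∑ i, ptraceSOR (X i) p q := by
  simp only [ptraceSOR, Matrix.of_apply, Matrix.sum_apply]
  exact Finset.sum_comm

lemma ptraceSOR_add (X Y : Matrix ((Fin n → Fin dI × Fin dO) × (Fin n → Fin n))
      ((Fin n → Fin dI × Fin dO) × (Fin n → Fin n)) ℂ)
    (p q : (Fin n → Fin dI) × (Fin n → Fin n)) :
    ptraceSOR (X + Y) p q = ptraceSOR X p q + ptraceSOR Y p q := by
  simp [ptraceSOR, Finset.sum_add_distrib]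

lemma ptraceSOR_sub (X Y : Matrix ((Fin n → Fin dI × Fin dO) × (Fin n → Fin n))
      ((Fin n → Fin dI × Fin dO) × (Fin n → Fin n)) ℂ)
    (p q : (Fin n → Fin dI) × (Fin n → Fin n)) :
    ptraceSOR (X - Y) p q = ptraceSOR X p q - ptraceSOR Y p q := by
  simp [ptraceSOR, Finset.sum_sub_distrib]

lemma ptraceSOR_smul (c : ℂ) (X : Matrix ((Fin n → Fin dI × Fin dO) × (Fin n → Fin n))
      ((Fin n → Fin dI × Fin dO) × (Fin n → Fin n)) ℂ)
    (p q : (Fin n → Fin dI) × (Fin n → Fin n)) :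
    ptraceSOR (c • X) p q = c * ptraceSOR X p q := by
  simp [ptraceSOR, Finset.mul_sum]

lemma ptraceSO_one (x y : Fin n → Fin dI) :
    ptraceSO (1 : Matrix (Fin n → Fin dI × Fin dO) (Fin n → Fin dI × Fin dO) ℂ) x y
      = ((dO : ℂ) ^ n) * (1 : Matrix (Fin n → Fin dI) (Fin n → Fin dI) ℂ) x y := by
  have h : ∀ b : Fin n → Fin dO,
      ((fun k => (x k, b k)) = fun k => (y k, b k)) ↔ x = y := by
    intro b
    constructor
    · intro h; funext k
      exact congrArg Prod.fst (congrFun h k)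
    · rintro rfl; rfl
  simp only [ptraceSO, Matrix.of_apply, Matrix.one_apply]
  simp only [h]
  rw [Finset.sum_const, Finset.card_univ]
  simp [Fintype.card_fun, nsmul_eq_mul]

lemma ptraceSOR_one (p q : (Fin n → Fin dI) × (Fin n → Fin n)) :
    ptraceSOR (1 : Matrix ((Fin n → Fin dI × Fin dO) × (Fin n → Fin n))
      ((Fin n → Fin dI × Fin dO) × (Fin n → Fin n)) ℂ) p q
      = ((dO : ℂ) ^ n) * (1 : Matrix ((Fin n → Fin dI) × (Fin n → Fin n))
          ((Fin n → Fin dI) × (Fin n → Fin n)) ℂ) p q := by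
  have h : ∀ b : Fin n → Fin dO,
      (((fun k => (p.1 k, b k)), p.2) = (((fun k => (q.1 k, b k)), q.2)
        : (Fin n → Fin dI × Fin dO) × (Fin n → Fin n))) ↔ p = q := by
    intro b
    rw [Prod.ext_iff, Prod.ext_iff]
    constructor
    · rintro ⟨h1, h2⟩
      exact ⟨funext fun k => congrArg Prod.fst (congrFun h1 k), h2⟩
    · rintro ⟨h1, h2⟩
      exact ⟨by rw [h1], h2⟩
  simp only [ptraceSOR, Matrix.of_apply, Matrix.one_apply]
  simp only [h]
  rw [Finset.sum_const, Finset.card_univ]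
  simp [Fintype.card_fun, nsmul_eq_mul]

end aux

/-- given an instrument consisting of `N` positive semidefinite product
operators `M_{i_1…i_n} = M_{i_1} ⊗ … ⊗ M_{i_n}` whose sum `M` satisfies
`Tr_{S_O}[M] = 1^{S_I}`, the invariant measurement operators
`M^inv_{i_1…i_n} = R(M_{i_1…i_n}) + (1/(N d_O))·(1^{S R_I} − R(1^S))`, with
`d_O = (dim H_O)^n`, satisfy `Tr_{S_O}[Σ M^inv_{i_1…i_n}] = 1^{S_I R_I}`: they sum to
the Choi matrix of a CPTP map. -/
theorem invariant_instrument_is_CPTP (n dI dO : ℕ)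
    (ι : Fin n → Type) [∀ k, Fintype (ι k)] [∀ k, Nonempty (ι k)]
    (M : ∀ k, ι k → Matrix (Fin dI × Fin dO) (Fin dI × Fin dO) ℂ)
    (hpsd : ∀ k i, (M k i).PosSemidef)
    (hsum : ptraceSO (∑ i : ∀ k, ι k, tensorAll fun k => M k (i k)) = 1) :
    ptraceSOR (∑ i : ∀ k, ι k,
        (Rmap n dI dO (tensorAll fun k => M k (i k)) +
          (((Fintype.card (∀ k, ι k) * dO ^ n : ℕ) : ℂ))⁻¹ •
            ((1 : Matrix _ _ ℂ) - Rmap n dI dO 1))) = 1 := by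
  classical
  by_cases hdeg : dO = 0 ∧ 0 < n
  · obtain ⟨h0, hn⟩ := hdeg
    subst h0
    haveI hE : IsEmpty (Fin n → Fin 0) := ⟨fun f => (f ⟨0, hn⟩).elim0⟩
    rcases Nat.eq_zero_or_pos dI with hdI | hdI
    · subst hdI
      haveI : IsEmpty ((Fin n → Fin 0) × (Fin n → Fin n)) :=
        ⟨fun p => (p.1 ⟨0, hn⟩).elim0⟩
      ext p q
      exact isEmptyElim p
    · exfalso
      set a : Fin n → Fin dI := fun _ => ⟨0, hdI⟩ with ha
      have h2 : ptraceSO (∑ i : ∀ k, ι k, tensorAll fun k => M k (i k)) a a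
          = (1 : Matrix (Fin n → Fin dI) (Fin n → Fin dI) ℂ) a a := by rw [hsum]
      simp [ptraceSO, Matrix.one_apply] at h2
  · have hpow : dO ^ n ≠ 0 := by
      intro h
      have hdO0 : dO = 0 := by
        by_contra hd
        exact (pow_ne_zero n hd) h
      have hn : n ≠ 0 := by
        intro hn0; subst hn0; simp at h
      exact hdeg ⟨hdO0, Nat.pos_of_ne_zero hn⟩
    have hN : (Fintype.card (∀ k, ι k)) ≠ 0 := Fintype.card_ne_zero
    have hc : ((Fintype.card (∀ k, ι k) * dO ^ n : ℕ) : ℂ) ≠ 0 :=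
      Nat.cast_ne_zero.mpr (Nat.mul_ne_zero hN hpow)
    have hcancel : ((Fintype.card (∀ k, ι k) : ℂ) * ((dO : ℂ) ^ n)) *
        (((Fintype.card (∀ k, ι k) * dO ^ n : ℕ) : ℂ))⁻¹ = 1 := by
      rw [show ((Fintype.card (∀ k, ι k) * dO ^ n : ℕ) : ℂ)
          = (Fintype.card (∀ k, ι k) : ℂ) * (dO : ℂ) ^ n by push_cast; ring] at hc ⊢
      exact mul_inv_cancel₀ hc
    ext p q
    rw [ptraceSOR_sum]
    simp only [ptraceSOR_add, ptraceSOR_smul, ptraceSOR_sub, ptraceSOR_Rmap,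
      ptraceSOR_one, ptraceSO_one]
    rw [Finset.sum_add_distrib, Finset.sum_const, Finset.card_univ, nsmul_eq_mul]
    have h1 : (∑ i : ∀ k, ι k, ∑ g : Equiv.Perm (Fin n),
          ptraceSO (tensorAll fun k => M k (i k)) (p.1 ∘ g) (q.1 ∘ g) *
            refProj n (p.2 ∘ g) (q.2 ∘ g))
        = ∑ g : Equiv.Perm (Fin n),
            (1 : Matrix (Fin n → Fin dI) (Fin n → Fin dI) ℂ) (p.1 ∘ g) (q.1 ∘ g) *
              refProj n (p.2 ∘ g) (q.2 ∘ g) := by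
      rw [Finset.sum_comm]
      refine Finset.sum_congr rfl fun g _ => ?_
      rw [← Finset.sum_mul, ← ptraceSO_sum, hsum]
    have h2 : (∑ g : Equiv.Perm (Fin n),
          ((dO : ℂ) ^ n * (1 : Matrix (Fin n → Fin dI) (Fin n → Fin dI) ℂ)
            (p.1 ∘ g) (q.1 ∘ g)) * refProj n (p.2 ∘ g) (q.2 ∘ g))
        = (dO : ℂ) ^ n * ∑ g : Equiv.Perm (Fin n),
            (1 : Matrix (Fin n → Fin dI) (Fin n → Fin dI) ℂ) (p.1 ∘ g) (q.1 ∘ g) *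
              refProj n (p.2 ∘ g) (q.2 ∘ g) := by
      rw [Finset.mul_sum]
      exact Finset.sum_congr rfl fun g _ => mul_assoc _ _ _
    rw [h1, h2]
    set Pe := ∑ g : Equiv.Perm (Fin n),
        (1 : Matrix (Fin n → Fin dI) (Fin n → Fin dI) ℂ) (p.1 ∘ g) (q.1 ∘ g) *
          refProj n (p.2 ∘ g) (q.2 ∘ g) with hPe
    linear_combination ((1 : Matrix ((Fin n → Fin dI) × (Fin n → Fin n))
      ((Fin n → Fin dI) × (Fin n → Fin n)) ℂ) p q - Pe) * hcancel
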